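/- Let K be a field, S = K[x_1,…,x_n], and let I ⊆ S be a squarefree monomial ideal. Then sdepth(I) = max{ sdepth(D) : D is a squarefree Stanley decomposition of I }, i.e. the Stanley depth of I is attained by a squarefree Stanley decomposition. -/

import Mathlib

open MvPolynomial

/-- The Stanley space `u K[Z]`: the `K`-span of all monomials `x^(u+τ)` with
`supp τ ⊆ Z`. -/
noncomputable def StanleySpace (K : Type*) [Field K] {n : ℕ} (u : Fin n →₀ ℕ) (Z : Finset (Fin n)) :
    Submodule K (MvPolynomial (Fin n) K) :=
  Submodule.span K {p | ∃ τ : Fin n →₀ ℕ, (τ.support : Set (Fin n)) ⊆ Z ∧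
    p = monomial (u + τ) (1 : K)}

/-- A Stanley decomposition of a monomial ideal `I`: a finite family of Stanley spaces
`u_i K[Z_i]` with `u_i` a monomial of `I`, whose internal direct sum is `I`
(as a `K`-vector space). -/
structure StanleyDecomposition (K : Type*) [Field K] {n : ℕ}
    (I : Ideal (MvPolynomial (Fin n) K)) where
  r : ℕ
  rpos : 0 < r
  u : Fin r → (Fin n →₀ ℕ)
  Z : Fin r → Finset (Fin n)
  mem : ∀ i, monomial (u i) (1 : K) ∈ I
  isSup : Submodule.restrictScalars K I = ⨆ i, StanleySpace K (u i) (Z i)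
  indep : iSupIndep fun i => StanleySpace K (u i) (Z i)

/-- `sdepth 𝒟 = min_i |Z_i|`. -/
def StanleyDecomposition.sdepth {K : Type*} [Field K] {n : ℕ}
    {I : Ideal (MvPolynomial (Fin n) K)} (D : StanleyDecomposition K I) : ℕ :=
  Finset.univ.inf' ⟨⟨0, D.rpos⟩, Finset.mem_univ _⟩ fun i => (D.Z i).card

/-- The Stanley depth of a monomial ideal: the maximum of `sdepth 𝒟` over all
Stanley decompositions `𝒟` of `I`. -/
noncomputable def Ideal.sdepth (K : Type*) [Field K] {n : ℕ}
    (I : Ideal (MvPolynomial (Fin n) K)) : ℕ :=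
  sSup (Set.range fun D : StanleyDecomposition K I => D.sdepth)

/-- The squarefree exponent vector of `x_F = ∏_{i ∈ F} x_i`. -/
noncomputable def sfVec {n : ℕ} (F : Finset (Fin n)) : Fin n →₀ ℕ :=
  Finsupp.indicator F fun _ _ => 1

/-- A Stanley decomposition is squarefree if each `uᵢ` is squarefree and
`supp uᵢ ⊆ Zᵢ`. -/
def StanleyDecomposition.IsSquarefree {K : Type*} [Field K] {n : ℕ}
    {I : Ideal (MvPolynomial (Fin n) K)} (D : StanleyDecomposition K I) : Prop :=
  ∀ i, (∀ j, D.u i j ≤ 1) ∧ (D.u i).support ⊆ D.Z i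

/-! A Stanley decomposition of a monomial ideal `I` amounts to a partition of the exponent set of
`I` into sets `stanleySet u Z = u + ℕ^Z`. If `I` is squarefree, `x^a ∈ I` iff `x_{supp a} ∈ I`.
Keep only the spaces `u K[Z]` with `u` squarefree and enlarge each to `u K[Z ∪ supp u]`: the
monomial `x^a` lies in the enlarged space of `u` exactly when `x_{supp a}` lies in the old one,
so the enlarged spaces again partition `I`, and no `Z` has become smaller. -/

open Function

namespace MvPolynomial

variable {σ R : Type*} [CommSemiring R]

lemma restrictSupport_iUnion {ι : Sort*} (s : ι → Set (σ →₀ ℕ)) :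
    restrictSupport R (⋃ i, s i) = ⨆ i, restrictSupport R (s i) := by
  simp only [restrictSupport_eq_span, Set.image_iUnion, Submodule.span_iUnion]

lemma disjoint_restrictSupport_iff [Nontrivial R] {s t : Set (σ →₀ ℕ)} :
    Disjoint (restrictSupport R s) (restrictSupport R t) ↔ Disjoint s t := by
  refine ⟨fun h => Set.disjoint_left.2 fun a has hat => ?_, fun h => ?_⟩
  · have := Submodule.disjoint_def.1 h (monomial a (1 : R)) (by simpa using has)
      (by simpa using hat)
    exact one_ne_zero (monomial_eq_zero.1 this)
  · refine Submodule.disjoint_def.2 fun p hs ht => support_eq_empty.1 ?_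
    rw [mem_restrictSupport_iff] at hs ht
    exact Finset.coe_eq_empty.1 (le_bot_iff.1 (h hs ht))

lemma iSupIndep_restrictSupport_iff [Nontrivial R] {ι : Type*} {s : ι → Set (σ →₀ ℕ)} :
    iSupIndep (fun i => restrictSupport R (s i)) ↔ Pairwise (Disjoint on s) := by
  simp only [iSupIndep_def, ← restrictSupport_iUnion, disjoint_restrictSupport_iff]
  exact iSupIndep_def.symm.trans iSupIndep_iff_pairwiseDisjoint

end MvPolynomial

section

variable {n : ℕ}

lemma sfVec_apply (F : Finset (Fin n)) (j : Fin n) : sfVec F j = if j ∈ F then 1 else 0 := by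
  simp [sfVec, Finsupp.indicator_apply]

@[simp]
lemma support_sfVec (F : Finset (Fin n)) : (sfVec F).support = F := by
  ext j
  simp [Finsupp.mem_support_iff, sfVec_apply]

lemma sfVec_le_iff {F : Finset (Fin n)} {a : Fin n →₀ ℕ} : sfVec F ≤ a ↔ F ⊆ a.support := by
  simp only [Finsupp.le_def, sfVec_apply, Finset.subset_iff, Finsupp.mem_support_iff]
  refine forall_congr' fun j => ?_
  split_ifs <;> simp_all [Nat.one_le_iff_ne_zero]

lemma monomial_mem_span_sfVec_iff {K : Type*} [Field K] {m : ℕ} (G : Fin m → Finset (Fin n))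
    (a : Fin n →₀ ℕ) :
    monomial a (1 : K) ∈
        Ideal.span (Set.range fun i => monomial (sfVec (G i)) (1 : K)) ↔
      ∃ i, G i ⊆ a.support := by
  rw [Set.range_comp' (fun s => monomial s (1 : K)) fun i => sfVec (G i),
    mem_ideal_span_monomial_image]
  simp [sfVec_le_iff]

def stanleySet (u : Fin n →₀ ℕ) (Z : Finset (Fin n)) : Set (Fin n →₀ ℕ) :=
  {a | u ≤ a ∧ ∀ j ∉ Z, a j = u j}

lemma stanleySpace_eq_restrictSupport (K : Type*) [Field K] (u : Fin n →₀ ℕ)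
    (Z : Finset (Fin n)) : StanleySpace K u Z = restrictSupport K (stanleySet u Z) := by
  rw [StanleySpace, restrictSupport_eq_span]
  congr 1
  ext p
  constructor
  · rintro ⟨τ, hτ, rfl⟩
    refine ⟨u + τ, ⟨le_add_right le_rfl, fun j hj => ?_⟩, rfl⟩
    simp [Finsupp.notMem_support_iff.1 fun h => hj (hτ h)]
  · rintro ⟨a, ⟨hua, haZ⟩, rfl⟩
    refine ⟨a - u, fun j hj => by_contra fun hjZ => ?_, by rw [add_tsub_cancel_of_le hua]⟩
    simp_all

lemma self_mem_stanleySet (u : Fin n →₀ ℕ) (Z : Finset (Fin n)) : u ∈ stanleySet u Z :=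
  ⟨le_rfl, fun _ _ => rfl⟩

lemma squarefree_of_sfVec_mem_stanleySet {u : Fin n →₀ ℕ} {Z F : Finset (Fin n)}
    (h : sfVec F ∈ stanleySet u Z) (j : Fin n) : u j ≤ 1 :=
  (h.1 j).trans (by rw [sfVec_apply]; split_ifs <;> simp)

lemma mem_stanleySet_support_union_iff {u : Fin n →₀ ℕ} (hu : ∀ j, u j ≤ 1)
    {Z : Finset (Fin n)} {a : Fin n →₀ ℕ} :
    a ∈ stanleySet u (u.support ∪ Z) ↔ sfVec a.support ∈ stanleySet u Z := by
  simp only [stanleySet, Set.mem_ofPred_eq, Finsupp.le_def, ← forall_and]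
  refine forall_congr' fun j => ?_
  have := hu j
  by_cases hj : j ∈ Z <;> by_cases ha : a j = 0 <;> simp [sfVec_apply, hj, ha] <;> omega

namespace StanleyDecomposition

variable {K : Type*} [Field K] {I : Ideal (MvPolynomial (Fin n) K)}

lemma restrictScalars_eq_restrictSupport (D : StanleyDecomposition K I) :
    Submodule.restrictScalars K I = restrictSupport K (⋃ i, stanleySet (D.u i) (D.Z i)) := by
  simp only [D.isSup, restrictSupport_iUnion, stanleySpace_eq_restrictSupport]

lemma monomial_mem_iff (D : StanleyDecomposition K I) {a : Fin n →₀ ℕ} :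
    monomial a (1 : K) ∈ I ↔ ∃ i, a ∈ stanleySet (D.u i) (D.Z i) := by
  rw [← Submodule.restrictScalars_mem K, D.restrictScalars_eq_restrictSupport]
  simp

lemma pairwise_disjoint_stanleySet (D : StanleyDecomposition K I) :
    Pairwise (Disjoint on fun i => stanleySet (D.u i) (D.Z i)) :=
  iSupIndep_restrictSupport_iff.1 (by simpa only [stanleySpace_eq_restrictSupport] using D.indep)

lemma sdepth_le_card (D : StanleyDecomposition K I) (i : Fin D.r) : D.sdepth ≤ (D.Z i).card :=
  Finset.inf'_le _ (Finset.mem_univ i)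

section OfFintype

variable {ι : Type*} [Fintype ι] [Nonempty ι] (u : ι → Fin n →₀ ℕ) (Z : ι → Finset (Fin n))
  (hI : Submodule.restrictScalars K I = restrictSupport K (⋃ i, stanleySet (u i) (Z i)))
  (hdisj : Pairwise (Disjoint on fun i => stanleySet (u i) (Z i)))

noncomputable def ofFintype : StanleyDecomposition K I where
  r := Fintype.card ι
  rpos := Fintype.card_pos
  u := u ∘ (Fintype.equivFin ι).symm
  Z := Z ∘ (Fintype.equivFin ι).symm
  mem t := by
    rw [← Submodule.restrictScalars_mem K, hI]
    simpa using ⟨_, self_mem_stanleySet _ _⟩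
  isSup := by
    simp only [comp_apply, stanleySpace_eq_restrictSupport, hI, restrictSupport_iUnion]
    exact ((Fintype.equivFin ι).symm.iSup_comp (g := fun i => restrictSupport K _)).symm
  indep := by
    simp only [stanleySpace_eq_restrictSupport]
    exact iSupIndep_restrictSupport_iff.2 fun s t hst =>
      hdisj ((Fintype.equivFin ι).symm.injective.ne hst)

variable {u Z}

lemma le_sdepth_ofFintype {k : ℕ} (h : ∀ i, k ≤ (Z i).card) :
    k ≤ (ofFintype u Z hI hdisj).sdepth :=
  Finset.le_inf' _ _ fun _ _ => h _

lemma isSquarefree_ofFintype (h : ∀ i, (∀ j, u i j ≤ 1) ∧ (u i).support ⊆ Z i) :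
    (ofFintype u Z hI hdisj).IsSquarefree :=
  fun _ => h _

end OfFintype

theorem exists_isSquarefree_le (D : StanleyDecomposition K I)
    (hrad : ∀ a, monomial a (1 : K) ∈ I ↔ monomial (sfVec a.support) (1 : K) ∈ I) :
    ∃ D' : StanleyDecomposition K I, D'.IsSquarefree ∧ D.sdepth ≤ D'.sdepth := by
  let ι := {i // ∀ j, D.u i j ≤ 1}
  let Z (i : ι) := (D.u i).support ∪ D.Z i
  have hmem (i : ι) (a : Fin n →₀ ℕ) :
      a ∈ stanleySet (D.u i) (Z i) ↔ sfVec a.support ∈ stanleySet (D.u i) (D.Z i) :=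
    mem_stanleySet_support_union_iff i.2
  have hunion : ⋃ i : ι, stanleySet (D.u i) (Z i) = ⋃ i, stanleySet (D.u i) (D.Z i) := by
    ext a
    rw [Set.mem_iUnion, Set.mem_iUnion, ← D.monomial_mem_iff, hrad, D.monomial_mem_iff]
    constructor
    · rintro ⟨i, h⟩
      exact ⟨i, (hmem i a).1 h⟩
    · rintro ⟨k, h⟩
      exact ⟨⟨k, squarefree_of_sfVec_mem_stanleySet h⟩, (hmem _ a).2 h⟩
  have hdisj : Pairwise (Disjoint on fun i : ι => stanleySet (D.u i) (Z i)) :=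
    fun i k hik => Set.disjoint_left.2 fun a hi hk =>
      Set.disjoint_left.1 (D.pairwise_disjoint_stanleySet (Subtype.coe_injective.ne hik))
        ((hmem i a).1 hi) ((hmem k a).1 hk)
  have : Nonempty ι := by
    have h0 : D.u ⟨0, D.rpos⟩ ∈ ⋃ i, stanleySet (D.u i) (D.Z i) :=
      Set.mem_iUnion.2 ⟨_, self_mem_stanleySet _ _⟩
    rw [← hunion, Set.mem_iUnion] at h0
    exact h0.nonempty
  refine ⟨ofFintype (fun i : ι => D.u i) Z (hunion ▸ D.restrictScalars_eq_restrictSupport) hdisj,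
    isSquarefree_ofFintype _ _ fun i => ⟨i.2, Finset.subset_union_left⟩,
    le_sdepth_ofFintype _ _ fun i => (D.sdepth_le_card i).trans
      (Finset.card_le_card Finset.subset_union_right)⟩

end StanleyDecomposition

end

/-- If `I ⊆ K[x₁,…,xₙ]` is a squarefree monomial ideal, then the Stanley depth of `I`
is the maximum of `sdepth D` over the squarefree Stanley decompositions `D` of `I`. -/
theorem sdepth_eq_sup_squarefree (n : ℕ) (K : Type*) [Field K]
    (I : Ideal (MvPolynomial (Fin n) K))
    (m : ℕ) (G : Fin m → Finset (Fin n))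
    (hI : I = Ideal.span (Set.range fun i => monomial (sfVec (G i)) (1 : K))) :
    Ideal.sdepth K I =
      sSup {k : ℕ | ∃ D : StanleyDecomposition K I, D.IsSquarefree ∧ D.sdepth = k} := by
  have hrad (a : Fin n →₀ ℕ) : monomial a (1 : K) ∈ I ↔ monomial (sfVec a.support) (1 : K) ∈ I := by
    simp only [hI, monomial_mem_span_sfVec_iff, support_sfVec]
  refine csSup_eq_csSup_of_forall_exists_le ?_ ?_
  · rintro _ ⟨D, rfl⟩
    obtain ⟨D', hsq, hle⟩ := D.exists_isSquarefree_le hrad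
    exact ⟨_, ⟨D', hsq, rfl⟩, hle⟩
  · rintro _ ⟨D, -, rfl⟩
    exact ⟨_, ⟨D, rfl⟩, le_rfl⟩
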